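/- Let C be a complete metric space and suppose a sequence satisfies u_{k+1} = P_{k+1} u_k, where each P_k : C → C is a contraction with constant q < 1 and fixed point u*_k. Then d(u_{k+1}, u*_{k+1}) ≤ q·d(u_k, u*_k) + (1+q)·d(u*_k, u*_{k+1}), and hence if d(u*_k, u*_{k+1}) → 0 then d(u_k, u*_k) → 0. -/
import Mathlib


open Filter

theorem aux_tendsto_contract (q : ℝ) (hq0 : 0 ≤ q) (hq : q < 1) (a b : ℕ → ℝ)
    (ha : ∀ k, 0 ≤ a k)
    (hrec : ∀ k, a (k+1) ≤ q * a k + b k)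
    (hb : Tendsto b atTop (nhds 0)) :
    Tendsto a atTop (nhds 0) := by
  rw [Metric.tendsto_atTop]
  intro ε hε
  have h1q : 0 < 1 - q := by linarith
  have hδ : 0 < ε * (1 - q) / 2 := by positivity
  obtain ⟨N, hN⟩ := (Metric.tendsto_atTop.mp hb) (ε * (1 - q) / 2) hδ
  have hbound : ∀ m, a (N + m) ≤ q ^ m * a N + ε / 2 := by
    intro m
    induction m with
    | zero => simp; linarith [ha N]
    | succ m ih =>
      have hb' : b (N + m) ≤ ε * (1 - q) / 2 := by
        have h := hN (N + m) (Nat.le_add_right N m)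
        rw [Real.dist_eq, sub_zero] at h
        exact le_of_lt (lt_of_le_of_lt (le_abs_self _) h)
      have heq : N + (m+1) = (N+m)+1 := by ring
      rw [heq]
      calc a ((N+m)+1) ≤ q * a (N+m) + b (N+m) := hrec _
        _ ≤ q * (q ^ m * a N + ε / 2) + ε * (1 - q) / 2 := by
            nlinarith [mul_le_mul_of_nonneg_left ih hq0]
        _ ≤ q ^ (m+1) * a N + ε / 2 := by ring_nf; nlinarith
  have hpow : Tendsto (fun m => q ^ m * a N) atTop (nhds 0) := by
    simpa using (tendsto_pow_atTop_nhds_zero_of_lt_one hq0 hq).mul_const (a N)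
  obtain ⟨M, hM⟩ := (Metric.tendsto_atTop.mp hpow) (ε / 2) (by linarith)
  refine ⟨N + M, fun k hk => ?_⟩
  have hNk : N ≤ k := le_trans (Nat.le_add_right N M) hk
  obtain ⟨m, rfl⟩ := Nat.exists_eq_add_of_le hNk
  have hm : M ≤ m := by omega
  have h1 := hbound m
  have h2 := hM m hm
  rw [Real.dist_eq, sub_zero] at h2 ⊢
  have h3 : q ^ m * a N < ε / 2 := lt_of_le_of_lt (le_abs_self _) h2
  rw [abs_of_nonneg (ha _)]
  linarith

/-- Stability lemma for iterating a slowly varying family of contractions: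
`d(u_{k+1}, u*_{k+1}) ≤ q d(u_k, u*_k) + (1+q) d(u*_k, u*_{k+1})`, and hence if the fixed
points vary slowly (`d(u*_k, u*_{k+1}) → 0`) then `d(u_k, u*_k) → 0`. -/
theorem varying_contractions_stability
    {C : Type*} [MetricSpace C] [CompleteSpace C]
    (q : ℝ) (hq0 : 0 ≤ q) (hq : q < 1)
    (P : ℕ → C → C)
    (hcontr : ∀ k, ∀ x y : C, dist (P k x) (P k y) ≤ q * dist x y)
    (ustar : ℕ → C)
    (hfix : ∀ k, P k (ustar k) = ustar k)
    (u : ℕ → C)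
    (hiter : ∀ k, u (k+1) = P (k+1) (u k)) :
    (∀ k, dist (u (k+1)) (ustar (k+1)) ≤
      q * dist (u k) (ustar k) + (1 + q) * dist (ustar k) (ustar (k+1))) ∧
    (Tendsto (fun k => dist (ustar k) (ustar (k+1))) atTop (nhds 0) →
      Tendsto (fun k => dist (u k) (ustar k)) atTop (nhds 0)) := by
  have key : ∀ k, dist (u (k+1)) (ustar (k+1)) ≤
      q * dist (u k) (ustar k) + (1 + q) * dist (ustar k) (ustar (k+1)) := by
    intro k
    have h1 : dist (u (k+1)) (ustar (k+1)) ≤ q * dist (u k) (ustar (k+1)) := by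
      rw [hiter k]
      calc dist (P (k+1) (u k)) (ustar (k+1))
          = dist (P (k+1) (u k)) (P (k+1) (ustar (k+1))) := by rw [hfix (k+1)]
        _ ≤ q * dist (u k) (ustar (k+1)) := hcontr _ _ _
    have h2 : dist (u k) (ustar (k+1)) ≤ dist (u k) (ustar k) + dist (ustar k) (ustar (k+1)) :=
      dist_triangle _ _ _
    have h3 := mul_le_mul_of_nonneg_left h2 hq0
    nlinarith [dist_nonneg (x := ustar k) (y := ustar (k+1))]
  refine ⟨key, fun hb => ?_⟩
  have hb' : Tendsto (fun k => (1 + q) * dist (ustar k) (ustar (k+1))) atTop (nhds 0) := by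
    simpa using hb.const_mul (1 + q)
  exact aux_tendsto_contract q hq0 hq _ _ (fun k => dist_nonneg) key hb'
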